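/- arXiv:2307.07424 — 6 statements merged into one kernel-verified Lean document; each statement's English description precedes it below -/
import Mathlib

section
/- Let n ≥ 3 be even and let s₀ⁿ⁻¹(x) = ⊕_{i=1}^{n-1} ∧_{j∈{1,...,n-1}, j≠i} x_j be the XOR of all degree-(n-2) monomials in variables x₁,...,x_{n-1}. Then for all Boolean inputs, s₀ⁿ⁻¹(x) ∧ (x₁ ⊕ x₂ ⊕ ⋯ ⊕ x_{n-1}) = x₁ ∧ x₂ ∧ ⋯ ∧ x_{n-1}. -/
open Finset

private lemma zmod2_sq (a : ZMod 2) : a * a = a := by revert a; decide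

private lemma even_smul_zmod2 {m : ℕ} (hm : Even m) (a : ZMod 2) : m • a = 0 := by
  rw [nsmul_eq_mul, (ZMod.natCast_eq_zero_iff m 2).mpr hm.two_dvd, zero_mul]

private lemma odd_smul_zmod2 {m : ℕ} (hm : Odd m) (a : ZMod 2) : m • a = a := by
  obtain ⟨k, rfl⟩ := hm
  rw [add_nsmul, even_smul_zmod2 (even_two_mul k), zero_add, one_nsmul]

/-- For even `n ≥ 3`, `s₀ⁿ⁻¹(x) ∧ (x₁ ⊕ ⋯ ⊕ x_{n-1}) = x₁ ∧ ⋯ ∧ x_{n-1}`,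
where `s₀ⁿ⁻¹` is the XOR of all degree-`(n-2)` monomials in `x₁,...,x_{n-1}`. -/
theorem stmt1 (n : ℕ) (hn : 3 ≤ n) (hev : Even n) (x : ℕ → ZMod 2) :
    (∑ i ∈ Icc 1 (n - 1), ∏ j ∈ (Icc 1 (n - 1)).erase i, x j) *
      (∑ i ∈ Icc 1 (n - 1), x i) = ∏ j ∈ Icc 1 (n - 1), x j := by
  have hev2 : Even (n - 2) := (Nat.even_sub (by omega)).mpr (by simp [hev])
  have hodd : Odd (n - 1) := Nat.Even.sub_odd (by omega) hev odd_one
  set S := Icc 1 (n - 1) with hS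
  have hcard : S.card = n - 1 := by simp [hS]
  have key : ∀ i ∈ S, (∏ j ∈ S.erase i, x j) * (∑ k ∈ S, x k)
      = ∏ j ∈ S, x j + (n - 2) • ∏ j ∈ S.erase i, x j := by
    intro i hi
    rw [Finset.mul_sum, ← Finset.add_sum_erase _ _ hi]
    congr 1
    · rw [mul_comm, Finset.mul_prod_erase _ _ hi]
    · have hterm : ∀ k ∈ S.erase i, (∏ j ∈ S.erase i, x j) * x k
          = ∏ j ∈ S.erase i, x j := by
        intro k hk
        rw [← Finset.mul_prod_erase _ _ hk, mul_comm, ← mul_assoc, zmod2_sq]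
      rw [Finset.sum_congr rfl hterm, Finset.sum_const, Finset.card_erase_of_mem hi,
        hcard, show n - 1 - 1 = n - 2 from by omega]
  rw [Finset.sum_mul, Finset.sum_congr rfl key, Finset.sum_add_distrib,
    Finset.sum_const, ← Finset.smul_sum]
  rw [even_smul_zmod2 hev2 (∑ i ∈ S, ∏ j ∈ S.erase i, x j), add_zero, hcard,
    odd_smul_zmod2 hodd]
end

section
/- Let n be even and s₀ⁿ⁻¹(x) = ⊕_{i=1}^{n-1} ∧_{j≠i, j≤n-1} x_j. Then s₀ⁿ(x) := ⊕_{i=1}^{n} ∧_{j∈{1,...,n}, j≠i} x_j satisfies s₀ⁿ(x) = s₀ⁿ⁻¹(x) ∧ (x₁ ⊕ x₂ ⊕ ⋯ ⊕ x_n) for all Boolean inputs. -/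
/-!
Splitting off `xₙ` gives `s₀ⁿ = xₙ s₀ⁿ⁻¹ + x₁⋯xₙ₋₁`. In `s₀ⁿ⁻¹ (x₁ + ⋯ + xₙ₋₁)`, every product
`(∏_{j ≠ i} x_j) x_k` collapses, by `x² = x`, to `x₁⋯xₙ₋₁` if `k = i` and to `∏_{j ≠ i} x_j` otherwise.
Since `n - 1` is odd, in characteristic 2 this leaves `s₀ⁿ⁻¹ (x₁ + ⋯ + xₙ₋₁) = x₁⋯xₙ₋₁`, and the two
sides agree.
-/

open Finset

variable {ι R : Type*} [DecidableEq ι]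

/-- The paper's `s₀ᵏ` is `sumProdErase (Icc 1 k) x`. -/
def sumProdErase [CommSemiring R] (s : Finset ι) (x : ι → R) : R :=
  ∑ i ∈ s, ∏ j ∈ s.erase i, x j

theorem sumProdErase_insert [CommSemiring R] {s : Finset ι} {a : ι} (ha : a ∉ s) (x : ι → R) :
    sumProdErase (insert a s) x = x a * sumProdErase s x + ∏ j ∈ s, x j := by
  unfold sumProdErase
  rw [sum_insert ha, erase_insert ha, add_comm, mul_sum]
  congr 1
  refine sum_congr rfl fun i hi => ?_
  have hai : a ∉ s.erase i := fun h => ha (mem_of_mem_erase h)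
  rw [erase_insert_of_ne (ne_of_mem_of_not_mem hi ha).symm, prod_insert hai]

theorem prod_erase_mul_sum_of_isIdempotentElem [CommSemiring R] {s : Finset ι} {x : ι → R}
    (hx : ∀ k ∈ s, IsIdempotentElem (x k)) {i : ι} (hi : i ∈ s) :
    (∏ j ∈ s.erase i, x j) * ∑ k ∈ s, x k =
      ∏ j ∈ s, x j + ((#s - 1 : ℕ) : R) * ∏ j ∈ s.erase i, x j := by
  have hcross : ∀ k ∈ s.erase i, (∏ j ∈ s.erase i, x j) * x k = ∏ j ∈ s.erase i, x j := by
    intro k hk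
    rw [← mul_prod_erase _ _ hk, mul_comm, ← mul_assoc, (hx k (mem_of_mem_erase hk)).eq]
  rw [← add_sum_erase _ _ hi, mul_add, mul_comm, mul_prod_erase _ _ hi, mul_sum,
    sum_congr rfl hcross, sum_const, card_erase_of_mem hi, nsmul_eq_mul]

theorem sumProdErase_mul_sum_of_odd [CommRing R] [CharP R 2] {s : Finset ι} {x : ι → R}
    (hx : ∀ k ∈ s, IsIdempotentElem (x k)) (hs : Odd #s) :
    sumProdErase s x * ∑ k ∈ s, x k = ∏ j ∈ s, x j := by
  have hcard : (#s : R) = 1 := by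
    rw [CharTwo.natCast_eq_ite, if_neg (Nat.not_even_iff_odd.mpr hs)]
  have hcard_pred : ((#s - 1 : ℕ) : R) = 0 := by
    rw [CharTwo.natCast_eq_ite, if_pos (Nat.Odd.sub_odd hs odd_one)]
  unfold sumProdErase
  rw [sum_mul, sum_congr rfl fun i hi => prod_erase_mul_sum_of_isIdempotentElem hx hi,
    sum_add_distrib, sum_const, nsmul_eq_mul, hcard, one_mul, ← mul_sum, hcard_pred, zero_mul,
    add_zero]

/-- For even `n`, `s₀ⁿ(x) = s₀ⁿ⁻¹(x) ∧ (x₁ ⊕ ⋯ ⊕ xₙ)`. -/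
theorem stmt2 (n : ℕ) (hev : Even n) (x : ℕ → ZMod 2) :
    (∑ i ∈ Icc 1 n, ∏ j ∈ (Icc 1 n).erase i, x j) =
      (∑ i ∈ Icc 1 (n - 1), ∏ j ∈ (Icc 1 (n - 1)).erase i, x j) *
        (∑ i ∈ Icc 1 n, x i) := by
  rcases n with _ | m
  · simp
  have hm : Odd #(Icc 1 m) := by
    rw [Nat.card_Icc, Nat.add_sub_cancel]
    exact Nat.not_even_iff_odd.mp (Nat.even_add_one.mp hev)
  have hx : ∀ k ∈ Icc 1 m, IsIdempotentElem (x k) := fun k _ => by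
    change x k * x k = x k
    generalize x k = a
    revert a
    decide
  have hnew : m + 1 ∉ Icc 1 m := by simp
  change sumProdErase _ x = sumProdErase _ x * _
  rw [Nat.add_sub_cancel, ← insert_Icc_right_eq_Icc_add_one (by omega), sumProdErase_insert hnew,
    sum_insert hnew, mul_add, sumProdErase_mul_sum_of_odd hx hm, mul_comm]
end

section
/- Let n ≥ 5 be odd. Then s₀ⁿ(x) = s₀ⁿ⁻²(x) ∧ ( ((x_{n-1} ⊕ x_n) ∧ (x₁ ⊕ ⋯ ⊕ x_{n-1})) ⊕ x_{n-1} ), where s₀ᵏ(x) = ⊕_{i=1}^{k} ∧_{j∈{1,...,k}, j≠i} x_j, holds for all Boolean inputs x₁,...,x_n. -/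
open Finset

lemma zmod2_idem : ∀ a : ZMod 2, a * a = a := by decide

lemma zmod2_two : (2 : ZMod 2) = 0 := by decide

lemma natCast_even (k : ℕ) (hk : Even k) : (k : ZMod 2) = 0 := by
  obtain ⟨c, hc⟩ := hk
  subst hc; push_cast; rw [← two_mul, zmod2_two, zero_mul]

lemma natCast_odd (k : ℕ) (hk : Odd k) : (k : ZMod 2) = 1 := by
  obtain ⟨c, hc⟩ := hk
  subst hc; push_cast; rw [zmod2_two]; ring

lemma key (s : Finset ℕ) (hs : Odd s.card) (x : ℕ → ZMod 2) :
    (∑ i ∈ s, ∏ j ∈ s.erase i, x j) * (∑ i ∈ s, x i) = ∏ j ∈ s, x j := by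
  rw [Finset.sum_mul_sum]
  have hinner : ∀ i ∈ s, (∑ l ∈ s, (∏ j ∈ s.erase i, x j) * x l) = ∏ j ∈ s, x j := by
    intro i hi
    rw [← Finset.add_sum_erase _ _ hi]
    have h1 : (∏ j ∈ s.erase i, x j) * x i = ∏ j ∈ s, x j := by
      rw [mul_comm, Finset.mul_prod_erase _ _ hi]
    have h2 : ∀ l ∈ s.erase i, (∏ j ∈ s.erase i, x j) * x l = ∏ j ∈ s.erase i, x j := by
      intro l hl
      rw [← Finset.mul_prod_erase _ x hl, mul_comm (x l), mul_assoc, zmod2_idem]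
    rw [Finset.sum_congr rfl h2, Finset.sum_const, h1]
    have hcard : Even (s.erase i).card := by
      rw [Finset.card_erase_of_mem hi]
      obtain ⟨c, hc⟩ := hs
      rw [hc]; simp [Nat.even_sub, Nat.succ_le_of_lt, parity_simps]
    rw [nsmul_eq_mul, natCast_even _ hcard, zero_mul, add_zero]
  rw [Finset.sum_congr rfl hinner, Finset.sum_const, nsmul_eq_mul,
    natCast_odd _ hs, one_mul]

lemma split3 (s : Finset ℕ) (a b : ℕ) (ha : a ∉ s) (hb : b ∉ s) (hab : a ≠ b)
    (x : ℕ → ZMod 2) :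
    (∑ i ∈ insert b (insert a s), ∏ j ∈ (insert b (insert a s)).erase i, x j) =
      (∑ i ∈ s, ∏ j ∈ s.erase i, x j) * (x a * x b) +
        (∏ j ∈ s, x j) * (x a + x b) := by
  have hbas : b ∉ insert a s := by simp [hab.symm, hb, Ne.symm hab]
  rw [Finset.sum_insert hbas, Finset.erase_insert hbas,
    Finset.sum_insert ha, Finset.prod_insert ha]
  have hea : (insert b (insert a s)).erase a = insert b s := by
    rw [Finset.erase_insert_of_ne (Ne.symm hab), Finset.erase_insert ha]
  rw [hea, Finset.prod_insert hb]
  have h3 : ∀ i ∈ s, ∏ j ∈ (insert b (insert a s)).erase i, x j =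
      x a * x b * ∏ j ∈ s.erase i, x j := by
    intro i hi
    have hia : i ≠ a := by rintro rfl; exact ha hi
    have hib : i ≠ b := by rintro rfl; exact hb hi
    have h1' : a ∉ s.erase i := fun h => ha (Finset.mem_of_mem_erase h)
    have h2' : b ∉ insert a (s.erase i) := by
      simp only [Finset.mem_insert, not_or]
      exact ⟨Ne.symm hab, fun h => hb (Finset.mem_of_mem_erase h)⟩
    rw [Finset.erase_insert_of_ne hib.symm, Finset.erase_insert_of_ne hia.symm,
      Finset.prod_insert h2', Finset.prod_insert h1']
    ring
  rw [Finset.sum_congr rfl h3, ← Finset.mul_sum]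
  ring

/-- For odd `n ≥ 5`,
`s₀ⁿ(x) = s₀ⁿ⁻²(x) ∧ (((x_{n-1} ⊕ xₙ) ∧ (x₁ ⊕ ⋯ ⊕ x_{n-1})) ⊕ x_{n-1})`. -/
theorem stmt3 (n : ℕ) (hn : 5 ≤ n) (hodd : Odd n) (x : ℕ → ZMod 2) :
    (∑ i ∈ Icc 1 n, ∏ j ∈ (Icc 1 n).erase i, x j) =
      (∑ i ∈ Icc 1 (n - 2), ∏ j ∈ (Icc 1 (n - 2)).erase i, x j) *
        ((x (n - 1) + x n) * (∑ i ∈ Icc 1 (n - 1), x i) + x (n - 1)) := by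
  obtain ⟨m, rfl⟩ : ∃ m, n = m + 2 := ⟨n - 2, by omega⟩
  have hm2 : m + 2 - 2 = m := by omega
  have hm1 : m + 2 - 1 = m + 1 := by omega
  rw [hm2, hm1]
  have hmodd : Odd m := by
    rcases hodd with ⟨c, hc⟩
    exact ⟨c - 1, by omega⟩
  have ha : m + 1 ∉ Icc 1 m := by simp
  have hb : m + 2 ∉ Icc 1 m := by simp
  have hIcc1 : Icc 1 (m + 1) = insert (m + 1) (Icc 1 m) := by
    rw [← Finset.insert_Icc_right_eq_Icc_add_one (by omega)]
  have hIcc2 : Icc 1 (m + 2) = insert (m + 2) (insert (m + 1) (Icc 1 m)) := by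
    have h := Finset.insert_Icc_right_eq_Icc_add_one (a := 1) (b := m + 1) (by omega); rw [hIcc1] at h; exact h.symm
  rw [hIcc2, hIcc1, split3 _ _ _ ha hb (by omega) x, Finset.sum_insert ha]
  have hkey := key (Icc 1 m) (by simpa using hmodd) x
  set S := ∑ i ∈ Icc 1 m, ∏ j ∈ (Icc 1 m).erase i, x j
  set T := ∑ i ∈ Icc 1 m, x i
  set P := ∏ j ∈ Icc 1 m, x j
  have hidem := zmod2_idem (x (m + 1))
  have h2 := zmod2_two
  linear_combination (-(x (m+1) + x (m+2))) * hkey + S * hidem.symm - S * x (m+1) * h2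
end

section
/- Let n ≥ 3 be odd. Define s₀ⁿ(x) = ⊕_{i=1}^n ∧_{j≠i} x_j and sₖⁿ(x) = (x_k ⊕ x_{k+1}) ∧ s₀ⁿ(x) for k ∈ {1,...,n-1}. Then for all Boolean inputs, s₀ⁿ(x) ⊕ ⊕_{i=1}^{(n-1)/2} s_{2i}ⁿ(x) = ∧_{j=2}^{n} x_j (i.e., equals f₁(x), the monomial missing x₁). -/
open Finset

lemma pair_sum (x : ℕ → ZMod 2) (m : ℕ) :
    ∑ i ∈ Icc 1 m, (x (2*i) + x (2*i+1)) = ∑ k ∈ Icc 2 (2*m+1), x k := by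
  induction m with
  | zero => simp
  | succ m ih =>
    have e1 : ∑ k ∈ Icc 2 (2*(m+1)+1), x k
        = (∑ k ∈ Icc 2 (2*m+1), x k + x (2*m+2)) + x (2*m+3) := by
      rw [show 2*(m+1)+1 = (2*m+2)+1 by ring, Finset.sum_Icc_succ_top (by omega),
          show (2*m+2)+1 = 2*m+3 by ring,
          show 2*m+2 = (2*m+1)+1 by ring, Finset.sum_Icc_succ_top (by omega)]
    rw [Finset.sum_Icc_succ_top (by omega : 1 ≤ m+1), ih, e1,
        show 2*(m+1) = 2*m+2 by ring, show 2*m+2+1 = 2*m+3 by ring]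
    ring

/-- For odd `n ≥ 3`, `s₀ⁿ(x) ⊕ ⊕_{i=1}^{(n-1)/2} s_{2i}ⁿ(x) = ∧_{j=2}^n x_j = f₁(x)`. -/
theorem stmt6 (n : ℕ) (hn : 3 ≤ n) (hodd : Odd n) (x : ℕ → ZMod 2) :
    (∑ m ∈ Icc 1 n, ∏ j ∈ (Icc 1 n).erase m, x j) +
      (∑ i ∈ Icc 1 ((n - 1) / 2),
        (x (2 * i) + x (2 * i + 1)) * ∑ m ∈ Icc 1 n, ∏ j ∈ (Icc 1 n).erase m, x j) =
      ∏ j ∈ Icc 2 n, x j := by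
  obtain ⟨t, ht⟩ := hodd
  have hxx : ∀ a : ZMod 2, a * a = a := by decide
  have h2a : ∀ a : ZMod 2, a + a = 0 := by decide
  set S := ∑ m ∈ Icc 1 n, ∏ j ∈ (Icc 1 n).erase m, x j with hS
  set P := ∏ j ∈ Icc 1 n, x j with hP
  have hfac : ∑ i ∈ Icc 1 ((n-1)/2), (x (2*i) + x (2*i+1)) * S
      = ∑ k ∈ Icc 2 n, x k * S := by
    rw [← Finset.sum_mul, ← Finset.sum_mul]
    congr 1
    rw [show (n-1)/2 = t by omega, pair_sum, show 2*t+1 = n by omega]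
  have key : ∀ k ∈ Icc 2 n, x k * S = P + S + ∏ j ∈ (Icc 1 n).erase k, x j := by
    intro k hk
    simp only [mem_Icc] at hk
    have hk' : k ∈ Icc 1 n := by simp only [mem_Icc]; omega
    have h2 : ∀ m ∈ (Icc 1 n).erase k, x k * ∏ j ∈ (Icc 1 n).erase m, x j
        = ∏ j ∈ (Icc 1 n).erase m, x j := by
      intro m hm
      have hkm : k ∈ ((Icc 1 n).erase m) := by
        simp only [mem_erase, mem_Icc] at hm ⊢
        exact ⟨fun h => hm.1 h.symm, by omega⟩
      conv_lhs => rw [← Finset.mul_prod_erase _ x hkm]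
      rw [← mul_assoc, hxx, Finset.mul_prod_erase _ x hkm]
    have hxkS : x k * S = P + ∑ m ∈ (Icc 1 n).erase k, ∏ j ∈ (Icc 1 n).erase m, x j := by
      rw [hS, Finset.mul_sum, ← Finset.add_sum_erase _ _ hk',
        Finset.mul_prod_erase _ x hk', Finset.sum_congr rfl h2]
    have hSsplit : S = (∏ j ∈ (Icc 1 n).erase k, x j)
        + ∑ m ∈ (Icc 1 n).erase k, ∏ j ∈ (Icc 1 n).erase m, x j := by
      rw [hS, ← Finset.add_sum_erase _ _ hk']
    rw [hxkS, hSsplit]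
    linear_combination - h2a (∏ j ∈ (Icc 1 n).erase k, x j)
  rw [hfac, Finset.sum_congr rfl key]
  have hone : (1 : ℕ) ∈ Icc 1 n := by simp; omega
  have herase1 : (Icc 1 n).erase 1 = Icc 2 n := by
    rw [Finset.Icc_erase_left, ← Finset.Icc_add_one_left_eq_Ioc]; rfl
  have hSsplit1 : S = (∏ j ∈ Icc 2 n, x j) + ∑ k ∈ Icc 2 n, ∏ j ∈ (Icc 1 n).erase k, x j := by
    rw [hS]
    conv_lhs => rw [← Finset.add_sum_erase _ _ hone]
    rw [herase1]
  rw [Finset.sum_add_distrib, Finset.sum_add_distrib, Finset.sum_const, Finset.sum_const,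
    Nat.card_Icc]
  have hcard : ∀ a : ZMod 2, (n + 1 - 2) • a = 0 := by
    intro a
    rw [show n + 1 - 2 = t * 2 by omega, mul_nsmul, two_nsmul, h2a]
  rw [hcard, hcard, add_zero, zero_add]
  rw [hSsplit1]
  linear_combination h2a (∑ k ∈ Icc 2 n, ∏ j ∈ (Icc 1 n).erase k, x j)
end

section
/- Let n ≥ 3 and define f_i(x) = ∧_{j≠i} x_j for i ∈ {1,...,n}, s₀ⁿ(x) = ⊕_{i=1}^n f_i(x), and sₖⁿ(x) = (x_k ⊕ x_{k+1}) ∧ s₀ⁿ(x). Then for every i ∈ {2,...,n}, f_i(x) = f_{i-1}(x) ⊕ s_{i-1}ⁿ(x) for all Boolean inputs. -/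
open Finset

/-- For `n ≥ 3` and every `i ∈ {2,...,n}`, `f_i(x) = f_{i-1}(x) ⊕ s_{i-1}ⁿ(x)`,
where `f_i(x) = ∧_{j≠i} x_j` and `s_kⁿ(x) = (x_k ⊕ x_{k+1}) ∧ s₀ⁿ(x)`. -/
theorem stmt7 (n : ℕ) (hn : 3 ≤ n) (i : ℕ) (hi : i ∈ Icc 2 n) (x : ℕ → ZMod 2) :
    (∏ j ∈ (Icc 1 n).erase i, x j) =
      (∏ j ∈ (Icc 1 n).erase (i - 1), x j) +
        (x (i - 1) + x i) * ∑ m ∈ Icc 1 n, ∏ j ∈ (Icc 1 n).erase m, x j := by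
  simp only [mem_Icc] at hi
  set s := Icc 1 n with hs
  have hi_s : i ∈ s := by simp only [hs, mem_Icc]; omega
  have hi1_s : i - 1 ∈ s := by simp only [hs, mem_Icc]; omega
  have idem : ∀ a : ZMod 2, a * a = a := by decide
  have key : ∀ k, k ∈ s → ∀ m, m ∈ s →
      x k * ∏ j ∈ s.erase m, x j =
      if k = m then ∏ j ∈ s, x j else ∏ j ∈ s.erase m, x j := by
    intro k hk m hm
    split_ifs with h
    · subst h; exact Finset.mul_prod_erase s x hk
    · have hk' : k ∈ s.erase m := Finset.mem_erase.mpr ⟨h, hk⟩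
      rw [← Finset.mul_prod_erase _ x hk', ← mul_assoc, idem]
  have sum_eq : ∀ k, k ∈ s → ∑ m ∈ s, x k * ∏ j ∈ s.erase m, x j
      = (∏ j ∈ s, x j) + ((∑ m ∈ s, ∏ j ∈ s.erase m, x j) - ∏ j ∈ s.erase k, x j) := by
    intro k hk
    rw [← Finset.add_sum_erase s _ hk, ← Finset.sum_erase_eq_sub hk]
    congr 1
    · rw [key k hk k hk]; simp
    · apply Finset.sum_congr rfl
      intro m hm
      rw [key k hk m (Finset.mem_of_mem_erase hm)]
      simp [Ne.symm (Finset.ne_of_mem_erase hm)]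
  have expand : (x (i - 1) + x i) * ∑ m ∈ s, ∏ j ∈ s.erase m, x j
      = (∑ m ∈ s, x (i - 1) * ∏ j ∈ s.erase m, x j)
        + ∑ m ∈ s, x i * ∏ j ∈ s.erase m, x j := by
    rw [add_mul, Finset.mul_sum, Finset.mul_sum]
  rw [expand, sum_eq _ hi1_s, sum_eq _ hi_s]
  have h2 : (2 : ZMod 2) = 0 := by decide
  linear_combination ((∏ j ∈ s.erase i, x j) - (∏ j ∈ s, x j)
    - ∑ m ∈ s, ∏ j ∈ s.erase m, x j) * h2
end

section
/- Let n ≥ 4 be even. Define s₀ⁿ(x) = ⊕_{i=1}^n ∧_{j≠i} x_j, sₖⁿ(x) = (x_k ⊕ x_{k+1}) ∧ s₀ⁿ(x), fₙ(x) = ∧_{j=1}^{n-1} x_j, and f₁(x) = ∧_{j=2}^n x_j. Then for all Boolean inputs, f₁(x) = s₀ⁿ(x) ⊕ fₙ(x) ⊕ ⊕_{i=1}^{(n-2)/2} s_{2i}ⁿ(x). -/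
open Finset

lemma reindex8 (g : ℕ → ZMod 2) (m : ℕ) :
    ∑ i ∈ Icc 1 m, (g (2 * i) + g (2 * i + 1)) = ∑ k ∈ Icc 2 (2 * m + 1), g k := by
  induction m with
  | zero => simp
  | succ m ih =>
    rw [Finset.sum_Icc_succ_top (by omega : 1 ≤ m + 1), ih,
      show 2 * (m + 1) + 1 = (2 * m + 1 + 1) + 1 from by ring,
      Finset.sum_Icc_succ_top (by omega : 2 ≤ 2 * m + 1 + 1 + 1),
      Finset.sum_Icc_succ_top (by omega : 2 ≤ 2 * m + 1 + 1),
      show 2 * (m + 1) = 2 * m + 1 + 1 from by ring]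
    ring

/-- For even `n ≥ 4`, `f₁(x) = s₀ⁿ(x) ⊕ fₙ(x) ⊕ ⊕_{i=1}^{(n-2)/2} s_{2i}ⁿ(x)`. -/
theorem stmt8 (n : ℕ) (hn : 4 ≤ n) (hev : Even n) (x : ℕ → ZMod 2) :
    (∏ j ∈ Icc 2 n, x j) =
      (∑ m ∈ Icc 1 n, ∏ j ∈ (Icc 1 n).erase m, x j) +
        (∏ j ∈ Icc 1 (n - 1), x j) +
        ∑ i ∈ Icc 1 ((n - 2) / 2),
          (x (2 * i) + x (2 * i + 1)) * ∑ m ∈ Icc 1 n, ∏ j ∈ (Icc 1 n).erase m, x j := by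
  classical
  have h2z : (2 : ZMod 2) = 0 := by decide
  have hsq : ∀ a : ZMod 2, a * a = a := by decide
  set g : ℕ → ZMod 2 := fun k => ∏ j ∈ (Icc 1 n).erase k, x j with hg
  set P : ZMod 2 := ∏ j ∈ Icc 1 n, x j with hP
  set S : ZMod 2 := ∑ m ∈ Icc 1 n, g m with hSdef
  -- key multiplication lemma
  have hmul : ∀ k ∈ Icc 1 n, x k * S = P + S + g k := by
    intro k hk
    have h1 : g k + ∑ m ∈ (Icc 1 n).erase k, g m = S := Finset.add_sum_erase _ g hk
    have h2 : ∀ m ∈ (Icc 1 n).erase k, x k * g m = g m := by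
      intro m hm
      rw [Finset.mem_erase] at hm
      have hkm : k ∈ (Icc 1 n).erase m :=
        Finset.mem_erase.2 ⟨fun h => hm.1 h.symm, hk⟩
      have he : x k * ∏ j ∈ ((Icc 1 n).erase m).erase k, x j = g m :=
        Finset.mul_prod_erase _ x hkm
      calc x k * g m = (x k * x k) * ∏ j ∈ ((Icc 1 n).erase m).erase k, x j := by
            rw [← he]; ring
        _ = x k * ∏ j ∈ ((Icc 1 n).erase m).erase k, x j := by rw [hsq]
        _ = g m := he
    have hkP : x k * g k = P := Finset.mul_prod_erase _ x hk
    calc x k * S = x k * (g k + ∑ m ∈ (Icc 1 n).erase k, g m) := by rw [h1]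
      _ = x k * g k + ∑ m ∈ (Icc 1 n).erase k, x k * g m := by
            rw [mul_add, Finset.mul_sum]
      _ = P + ∑ m ∈ (Icc 1 n).erase k, g m := by
            rw [hkP, Finset.sum_congr rfl h2]
      _ = P + S + g k := by
            rw [← h1]; linear_combination (-(g k)) * h2z
  -- each summand simplifies
  have hterm : ∀ i ∈ Icc 1 ((n - 2) / 2),
      (x (2 * i) + x (2 * i + 1)) * S = g (2 * i) + g (2 * i + 1) := by
    intro i hi
    rw [Finset.mem_Icc] at hi
    obtain ⟨m', hm'⟩ := hev
    have ha : 2 * i ∈ Icc 1 n := by rw [Finset.mem_Icc]; omega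
    have hb : 2 * i + 1 ∈ Icc 1 n := by rw [Finset.mem_Icc]; omega
    rw [add_mul, hmul _ ha, hmul _ hb]
    linear_combination (P + S) * h2z
  have hsum : ∑ i ∈ Icc 1 ((n - 2) / 2), (x (2 * i) + x (2 * i + 1)) * S
      = ∑ k ∈ Icc 2 (n - 1), g k := by
    rw [Finset.sum_congr rfl hterm, reindex8 g]
    congr 1
    obtain ⟨m', hm'⟩ := hev
    congr 1
    omega
  -- identify g 1 and g n
  have hg1 : g 1 = ∏ j ∈ Icc 2 n, x j := by
    rw [hg]
    simp only []
    rw [Finset.Icc_erase_left, ← Finset.Icc_add_one_left_eq_Ioc]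
    rfl
  have hgn : g n = ∏ j ∈ Icc 1 (n - 1), x j := by
    rw [hg]
    simp only []
    rw [Finset.Icc_erase_right]
    congr 1
  -- decompose S
  have hS : S = g 1 + g n + ∑ k ∈ Icc 2 (n - 1), g k := by
    have h1 : (1 : ℕ) ∈ Icc 1 n := by rw [Finset.mem_Icc]; omega
    rw [hSdef, ← Finset.add_sum_erase _ g h1, Finset.Icc_erase_left, ← Finset.Icc_add_one_left_eq_Ioc]
    have : ∑ k ∈ Icc (1 + 1) n, g k = ∑ k ∈ Icc 2 (n - 1), g k + g n := by
      rw [show n = n - 1 + 1 from by omega, Finset.sum_Icc_succ_top (by omega : 1 + 1 ≤ n - 1 + 1)]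
      norm_num
    rw [this]; ring
  rw [← hg1, ← hgn, hsum]
  linear_combination -hS - (g n + ∑ k ∈ Icc 2 (n - 1), g k) * h2z
end
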